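/- arXiv:0805.1272 — 2 statements merged into one kernel-verified Lean document; each statement's English description precedes it below -/
import Mathlib

section
/- For any integer m ≥ 1, let ℍ_m(x;t) = 1 + Σ_{n≥1} ℍ_{n,m}(x) t^n where ℍ_{n,m}(x) = Σ_{T ∈ 𝒯_{n,m+1}} ∏_{v ∈ 𝓘(T)} (x + 1/ℍ_v^∅) and ℍ_v^∅ is the number of internal vertices of the subtree of T rooted at v, regarded as a formal power series in t with coefficients in ℚ[x]. Then ℍ_m(x;t) satisfies the differential equation ℍ'_m(x;t) = (x+1)·ℍ_m(x;t)^{m+1} + (m+1)·x·t·ℍ_m(x;t)^m·ℍ'_m(x;t), where the prime denotes the formal derivative with respect to t. -/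
open Polynomial Finset

/-- A complete `m`-ary tree: a `leaf` is an external vertex and a `node`
has exactly `m` linearly ordered subtrees. -/
inductive MTree (m : ℕ) : Type
  | leaf : MTree m
  | node : (Fin m → MTree m) → MTree m

namespace MTree

/-- The number of internal vertices of a complete `m`-ary tree. -/
def internals {m : ℕ} : MTree m → ℕ
  | leaf => 0
  | node c => 1 + ∑ i, (c i).internals

/-- The first kind of hook length of the root of `node c`: one plus the number of
internal vertices of all subtrees except the rightmost one. -/
def hook1 {m : ℕ} (c : Fin m → MTree m) : ℕ :=
  1 + ∑ i ∈ Finset.univ.filter (fun i : Fin m => (i : ℕ) + 1 < m), (c i).internals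

/-- The product of `f (𝓗_v)` over all internal vertices `v` of a complete `m`-ary
tree, where `𝓗_v` is the first kind of hook length. -/
def hookProd1 {m : ℕ} {R : Type*} [CommSemiring R] (f : ℕ → R) : MTree m → R
  | leaf => 1
  | node c => f (hook1 c) * ∏ i, hookProd1 f (c i)

/-- The number of internal vertices of the `(m+1-|S|)`-ary tree `T^S` obtained from a
complete `(m+1)`-ary tree `T` by recursively deleting, for every `r ∈ S ⊆ [m]`,
the `r`-th subtree of every remaining internal vertex (the label `r ∈ {1,…,m}`
corresponds to the child with index `r - 1`, i.e. to `Fin.castSucc` of `Fin m`). -/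
def internalsS {m : ℕ} (S : Finset (Fin m)) : MTree (m + 1) → ℕ
  | leaf => 0
  | node c => 1 + ∑ i ∈ (S.image Fin.castSucc)ᶜ, internalsS S (c i)

/-- The product of `f (ℍ_v^S)` over all internal vertices `v` of a complete
`(m+1)`-ary tree, where `ℍ_v^S` is the second kind of hook length. -/
def hookProdS {m : ℕ} {R : Type*} [CommSemiring R] (S : Finset (Fin m)) (f : ℕ → R) :
    MTree (m + 1) → R
  | leaf => 1
  | node c => f (internalsS S (node c)) * ∏ i, hookProdS S f (c i)

end MTree

open scoped PowerSeries

/-- `ℍ_{n,m}(x) = Σ_{T ∈ 𝒯_{n,m+1}} ∏_{v ∈ 𝓘(T)} (x + 1/ℍ_v^∅)`, where `ℍ_v^∅` is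
the number of internal vertices of the subtree rooted at `v` (for `n = 0` the
only tree is the single external vertex, so `ℍ_{0,m}(x) = 1`). -/
noncomputable def hookPolyEmpty (m n : ℕ) : Polynomial ℚ :=
  ∑ᶠ T ∈ {T : MTree (m + 1) | T.internals = n},
    MTree.hookProdS (∅ : Finset (Fin m)) (fun h => (X : ℚ[X]) + C ((h : ℚ)⁻¹)) T

/-- The generating function `ℍ_m(x;t) = 1 + Σ_{n≥1} ℍ_{n,m}(x) tⁿ`. -/
noncomputable def hookGFEmpty (m : ℕ) : PowerSeries (Polynomial ℚ) :=
  PowerSeries.mk (hookPolyEmpty m)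


/-! Removing the root of a tree with `n + 1` internal vertices leaves an `(m + 1)`-tuple of trees
with `n` internal vertices in total, and the root, whose hook length is `n + 1`, contributes the
factor `x + 1/(n + 1)`. Hence `(n + 1) ℍ_{n+1,m} = ((n + 1) x + 1) [tⁿ] ℍ_m^{m+1}`, which is the
coefficient of `tⁿ` in `ℍ' = (x + 1) ℍ^{m+1} + x t (ℍ^{m+1})'`. -/

namespace PowerSeries

variable {R : Type*} [CommSemiring R]

theorem coeff_pow_eq_of_coeff_eq {f g : R⟦X⟧} {n : ℕ} (h : ∀ k ≤ n, coeff k f = coeff k g)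
    (j : ℕ) : coeff n (f ^ j) = coeff n (g ^ j) := by
  have htrunc : trunc (n + 1) f = trunc (n + 1) g := by
    ext k
    simp only [coeff_trunc]
    split_ifs with hk
    exacts [h k (Nat.lt_succ_iff.mp hk), rfl]
  have := congrArg (fun p => Polynomial.coeff p n)
    (congrArg (trunc (n + 1)) (congrArg (· ^ j) (congrArg ((↑) : R[X] → R⟦X⟧) htrunc)))
  simpa [trunc_trunc_pow, coeff_trunc] using this

theorem coeff_pow_mk_finsum {α : Type*} (size : α → ℕ) (w : α → R)
    (hfin : ∀ n, {a | size a ≤ n}.Finite) (j n : ℕ) :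
    coeff n (mk (fun k => ∑ᶠ a ∈ {a | size a = k}, w a) ^ j) =
      ∑ᶠ c ∈ {c : Fin j → α | ∑ i, size (c i) = n}, ∏ i, w (c i) := by
  classical
  -- Only objects of size `≤ n` matter, so truncate to a finite sum of monomials.
  set S := (hfin n).toFinset
  have hS : ∀ k ≤ n, coeff k (mk fun k => ∑ᶠ a ∈ {a | size a = k}, w a) =
      coeff k (∑ a ∈ S, monomial (size a) (w a)) := by
    intro k hk
    rw [coeff_mk, map_sum]
    simp only [coeff_monomial]
    rw [← Finset.sum_filter]
    exact finsum_mem_eq_sum_of_subset _ (fun a ha => by simp_all [S]) (fun a ha => by simp_all)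
  rw [coeff_pow_eq_of_coeff_eq hS, Finset.sum_pow']
  simp only [prod_monomial, map_sum, coeff_monomial]
  rw [← Finset.sum_filter]
  refine (finsum_mem_eq_sum_of_subset _ (fun c hc => ?_) (fun c hc => by simp_all)).symm
  simp only [Set.mem_inter_iff, Set.mem_ofPred_eq] at hc
  simp only [Finset.coe_filter, Fintype.mem_piFinset, Set.mem_ofPred_eq, S,
    Set.Finite.mem_toFinset]
  refine ⟨fun i => ?_, hc.1.symm⟩
  rw [← hc.1]
  exact Finset.single_le_sum (fun i _ => Nat.zero_le (size (c i))) (Finset.mem_univ i)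

theorem derivative_eq_of_coeff_succ {F G : R⟦X⟧} (x : R)
    (h : ∀ n : ℕ, coeff (n + 1) F * (n + 1) = (x * (n + 1) + 1) * coeff n G) :
    d⁄dX R F = C (x + 1) * G + C x * X * d⁄dX R G := by
  ext n
  rw [coeff_derivative, h, map_add, mul_assoc, coeff_C_mul, coeff_C_mul]
  rcases n with _ | n
  · simp
  · rw [coeff_succ_X_mul, coeff_derivative]
    push_cast
    ring

end PowerSeries

namespace MTree

variable {k : ℕ}

theorem finite_setOf_internals_le (n : ℕ) : {T : MTree k | T.internals ≤ n}.Finite := by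
  induction n with
  | zero =>
    refine (Set.finite_singleton leaf).subset fun T hT => ?_
    cases T with
    | leaf => rfl
    | node c => simp [internals] at hT
  | succ n ih =>
    refine (((Set.Finite.pi' fun _ : Fin k => ih).image node).insert leaf).subset fun T hT => ?_
    cases T with
    | leaf => exact Set.mem_insert _ _
    | node c =>
      refine Set.mem_insert_of_mem _ ⟨c, fun i => ?_, rfl⟩
      have := Finset.single_le_sum (fun j _ => Nat.zero_le (c j).internals) (Finset.mem_univ i)
      simp only [Set.mem_ofPred_eq, internals] at hT ⊢
      omega

theorem setOf_internals_succ (n : ℕ) :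
    {T : MTree k | T.internals = n + 1} = node '' {c | ∑ i, (c i).internals = n} := by
  ext T
  cases T with
  | leaf => simp [internals]
  | node c =>
    simp only [Set.mem_ofPred_eq, internals, Set.mem_image, node.injEq, exists_eq_right]
    omega

theorem internalsS_empty {m : ℕ} : ∀ T : MTree (m + 1), internalsS ∅ T = T.internals
  | leaf => rfl
  | node c => by simp [internalsS, internals, internalsS_empty]

theorem hookProdS_empty_node {m : ℕ} {R : Type*} [CommSemiring R] (f : ℕ → R)
    (c : Fin (m + 1) → MTree (m + 1)) :
    hookProdS ∅ f (node c) = f (node c).internals * ∏ i, hookProdS ∅ f (c i) := by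
  rw [hookProdS, internalsS_empty]

end MTree

theorem hookPolyEmpty_succ (m n : ℕ) :
    hookPolyEmpty m (n + 1) =
      (X + C ((n + 1 : ℚ)⁻¹)) * PowerSeries.coeff n (hookGFEmpty m ^ (m + 1)) := by
  set f : ℕ → ℚ[X] := fun h => X + C (h : ℚ)⁻¹
  have hGF : hookGFEmpty m =
      PowerSeries.mk fun k => ∑ᶠ T ∈ {T : MTree (m + 1) | T.internals = k}, T.hookProdS ∅ f :=
    rfl
  rw [hGF, PowerSeries.coeff_pow_mk_finsum _ _ MTree.finite_setOf_internals_le, hookPolyEmpty,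
    MTree.setOf_internals_succ, finsum_mem_image (fun _ _ _ _ => MTree.node.inj), mul_finsum_mem]
  refine finsum_mem_congr rfl fun c hc => ?_
  rw [MTree.hookProdS_empty_node, MTree.internals, Set.mem_ofPred_eq.mp hc, add_comm 1 n]
  simp only [f]
  push_cast
  ring

theorem hookGFEmpty_differential_equation_general (m : ℕ) :
    d⁄dX (Polynomial ℚ) (hookGFEmpty m) =
      PowerSeries.C ((X : ℚ[X]) + 1) * hookGFEmpty m ^ (m + 1) +
        PowerSeries.C (((m : ℚ) + 1) • (X : ℚ[X])) * PowerSeries.X *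
          hookGFEmpty m ^ m * d⁄dX (Polynomial ℚ) (hookGFEmpty m) := by
  have hrec : ∀ n : ℕ, PowerSeries.coeff (n + 1) (hookGFEmpty m) * ((n : ℚ[X]) + 1) =
      (X * ((n : ℚ[X]) + 1) + 1) * PowerSeries.coeff n (hookGFEmpty m ^ (m + 1)) := by
    intro n
    have hinv : C ((n + 1 : ℚ)⁻¹) * ((n : ℚ[X]) + 1) = 1 := by
      rw [← C_eq_natCast, ← C_1, ← C_add, ← C_mul, inv_mul_cancel₀ (by positivity)]
    rw [hookGFEmpty, PowerSeries.coeff_mk, hookPolyEmpty_succ, ← hookGFEmpty]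
    linear_combination PowerSeries.coeff n (hookGFEmpty m ^ (m + 1)) * hinv
  have hsmul : ((m : ℚ) + 1) • (X : ℚ[X]) = ((m : ℚ[X]) + 1) * X := by
    rw [smul_eq_C_mul, C_add, C_eq_natCast, C_1]
  conv_lhs => rw [PowerSeries.derivative_eq_of_coeff_succ X hrec]
  rw [PowerSeries.derivative_pow, add_tsub_cancel_right, hsmul]
  simp only [map_mul, map_add, map_natCast, map_one]
  push_cast
  ring

/-- **Differential equation for `ℍ_m(x;t)`.**  For `m ≥ 1`:
`ℍ'_m(x;t) = (x+1) ℍ_m(x;t)^{m+1} + (m+1) x t ℍ_m(x;t)^m ℍ'_m(x;t)`,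
the derivative being taken with respect to `t`. -/
theorem hookGFEmpty_differential_equation (m : ℕ) (hm : 1 ≤ m) :
    d⁄dX (Polynomial ℚ) (hookGFEmpty m) =
      PowerSeries.C ((X : ℚ[X]) + 1) * hookGFEmpty m ^ (m + 1) +
        PowerSeries.C (((m : ℚ) + 1) • (X : ℚ[X])) * PowerSeries.X *
          hookGFEmpty m ^ m * d⁄dX (Polynomial ℚ) (hookGFEmpty m) :=
  hookGFEmpty_differential_equation_general m
end

section
/- For any integer m ≥ 1, subset S ⊆ [m] = {1,2,…,m} with s = |S|, let {}_Sℍ_m(x;t) = 1 + Σ_{n≥1} ({}_Sℍ_{n,m}(x)) t^n where {}_Sℍ_{n,m}(x) = Σ_{T ∈ 𝒯_{n,m+1}} ∏_{v ∈ 𝓘(T)} (x + 1/ℍ_v^S), regarded as a formal power series in t with coefficients in ℚ[x]. Then {}_Sℍ_m(x;t) satisfies the differential equation {}_Sℍ'_m(x;t) = (x+1)·({}_Sℍ_m(x;t))^{m+1} + ((m−s+1)x + s(x+1))·t·({}_Sℍ_m(x;t))^m·{}_Sℍ'_m(x;t), where the prime denotes the formal derivative with respect to t. -/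
open Polynomial Finset

open scoped PowerSeries

/-- `{}_Sℍ_{n,m}(x) = Σ_{T ∈ 𝒯_{n,m+1}} ∏_{v ∈ 𝓘(T)} (x + 1/ℍ_v^S)` (for `n = 0`
the only tree is the single external vertex, so `{}_Sℍ_{0,m}(x) = 1`). -/
noncomputable def hookPolyS (m : ℕ) (S : Finset (Fin m)) (n : ℕ) : Polynomial ℚ :=
  ∑ᶠ T ∈ {T : MTree (m + 1) | T.internals = n},
    MTree.hookProdS S (fun h => (X : ℚ[X]) + C ((h : ℚ)⁻¹)) T

/-- The generating function `{}_Sℍ_m(x;t) = 1 + Σ_{n≥1} ({}_Sℍ_{n,m}(x)) tⁿ`. -/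
noncomputable def hookGFS (m : ℕ) (S : Finset (Fin m)) : PowerSeries (Polynomial ℚ) :=
  PowerSeries.mk (hookPolyS m S)

/-!
Write `H` for `{}_Sℍ_m`, `w(T) = ∏_v (x + 1/ℍ_v^S)`, `n(T)` for the number of internal vertices,
`h = ℍ_root^S`, and `P(T)` for the product of the weights of the root's subtrees, so that
`w(T) = (x + 1/h) P(T)` and `∑_T P(T) tⁿ⁽ᵀ⁾ = t H^{m+1}`. The internal vertices of `T` are the `h`
vertices of `T^S` together with those of the subtrees `B_{v,r}` hanging at the `r`-th child of a
vertex `v` of `T^S`, `r ∈ S`. Hence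
`n(T) w(T) = x n(T) P(T) + P(T) + ∑_{r ∈ S} ∑_{v ∈ T^S} n(B_{v,r}) P(T) / h`.
Cutting off `B_{v,r}` changes neither `T^S` nor the remaining weights, so the series of the last
sum factors as `Ξ_r · tH'`, where `Ξ_r` counts the pairs `(T, v)` with `B_{v,r}` a leaf, weighted by
`P(T) / h`. The same cut with `n(B)` replaced by `1` gives `Ξ_r H = t H^{m+1}` (the `1/h` averages
over the `h` vertices `v`), so `Ξ_r · tH' = t² H^m H'`, and
`tH' = x t (t H^{m+1})' + t H^{m+1} + s t² H^m H'`, which is the claim multiplied by `t`.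
-/

@[to_additive]
lemma Fintype.prod_update_mul_eq {ι M : Type*} [Fintype ι] [DecidableEq ι] [CommMonoid M]
    {f : ι → M} {i : ι} {a b c : M} (h : a * b = f i * c) :
    (∏ j, Function.update f i a j) * b = (∏ j, f j) * c := by
  rw [prod_update_of_mem (mem_univ i), prod_eq_mul_prod_sdiff_singleton_of_mem (mem_univ i),
    mul_right_comm, h, mul_right_comm]

namespace MTree

section Enumeration

variable {k : ℕ}

noncomputable instance : DecidableEq (MTree k) := Classical.decEq _

lemma internals_eq_zero_iff {T : MTree k} : T.internals = 0 ↔ T = leaf := by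
  cases T <;> simp [internals]

noncomputable def treesOfDepthLE : ℕ → Finset (MTree k)
  | 0 => {leaf}
  | d + 1 => insert leaf ((Fintype.piFinset fun _ => treesOfDepthLE d).image node)

lemma mem_treesOfDepthLE_of_internals_le {T : MTree k} {d : ℕ} (h : T.internals ≤ d) :
    T ∈ treesOfDepthLE d := by
  induction T generalizing d with
  | leaf => cases d <;> simp [treesOfDepthLE]
  | node c ih =>
    obtain ⟨e, rfl⟩ : ∃ e, d = e + 1 := ⟨d - 1, by simp only [internals] at h; omega⟩
    refine mem_insert_of_mem (mem_image.2 ⟨c, Fintype.mem_piFinset.2 fun i => ih i ?_, rfl⟩)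
    have := single_le_sum (fun j _ => Nat.zero_le (c j).internals) (mem_univ i)
    simp only [internals] at h
    omega

noncomputable def treesOfSize (n : ℕ) : Finset (MTree k) :=
  (treesOfDepthLE n).filter (·.internals = n)

@[simp] lemma mem_treesOfSize {T : MTree k} {n : ℕ} : T ∈ treesOfSize n ↔ T.internals = n := by
  simpa [treesOfSize] using fun h => mem_treesOfDepthLE_of_internals_le h.le

lemma treesOfSize_zero : treesOfSize 0 = ({leaf} : Finset (MTree k)) := by
  ext T
  simp [internals_eq_zero_iff]

lemma sum_treesOfSize_succ {M : Type*} [AddCommMonoid M] (f : MTree k → M) (n : ℕ) :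
    ∑ T ∈ treesOfSize (n + 1), f T =
      ∑ l ∈ finsuppAntidiag univ n, ∑ c ∈ Fintype.piFinset fun i => treesOfSize (l i),
        f (node c) := by
  rw [sum_sigma']
  symm
  refine sum_bij (fun x _ => node x.2) ?_ ?_ ?_ fun _ _ => rfl
  · rintro ⟨l, c⟩ hx
    simp only [mem_sigma, mem_finsuppAntidiag, Fintype.mem_piFinset, mem_treesOfSize] at hx
    simp only [mem_treesOfSize, internals, sum_congr rfl fun i _ => hx.2 i, hx.1.1]
    omega
  · rintro ⟨l, c⟩ hx ⟨l', c'⟩ hx' h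
    simp only [mem_sigma, Fintype.mem_piFinset, mem_treesOfSize] at hx hx'
    cases h
    obtain rfl : l = l' := Finsupp.ext fun i => (hx.2 i).symm.trans (hx'.2 i)
    rfl
  · rintro (_ | c) hT <;> simp only [mem_treesOfSize, internals] at hT
    · omega
    refine ⟨⟨Finsupp.equivFunOnFinite.symm fun i => (c i).internals, c⟩, ?_, rfl⟩
    simp only [mem_sigma, mem_finsuppAntidiag, Fintype.mem_piFinset, mem_treesOfSize]
    refine ⟨⟨?_, subset_univ _⟩, fun i => rfl⟩
    simp only [Finsupp.coe_equivFunOnFinite_symm]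
    omega

end Enumeration

section Series

variable {k : ℕ} {R : Type*} [CommSemiring R]

noncomputable def treeSeries : (MTree k → R) →ₗ[R] R⟦X⟧ where
  toFun φ := PowerSeries.mk fun n => ∑ T ∈ treesOfSize n, φ T
  map_add' φ ψ := by ext n; simp [sum_add_distrib]
  map_smul' a φ := by ext n; simp [mul_sum]

lemma coeff_treeSeries (φ : MTree k → R) (n : ℕ) :
    PowerSeries.coeff n (treeSeries φ) = ∑ T ∈ treesOfSize n, φ T :=
  PowerSeries.coeff_mk (R := R) n fun n => ∑ T ∈ treesOfSize n, φ T

lemma treeSeries_const_mul (a : R) (φ : MTree k → R) :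
    treeSeries (fun T => a * φ T) = PowerSeries.C a * treeSeries φ := by
  rw [← PowerSeries.smul_eq_C_mul, ← map_smul]
  rfl

lemma constantCoeff_treeSeries (φ : MTree k → R) :
    PowerSeries.constantCoeff (treeSeries φ) = φ leaf := by
  rw [← PowerSeries.coeff_zero_eq_constantCoeff_apply, coeff_treeSeries, treesOfSize_zero,
    sum_singleton]

def childProd (φ : MTree k → R) : MTree k → R
  | leaf => 0
  | node c => ∏ i, φ (c i)

lemma treeSeries_childProd (φ : MTree k → R) :
    treeSeries (childProd φ) = PowerSeries.X * treeSeries φ ^ k := by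
  ext (_ | n)
  · simp [constantCoeff_treeSeries, childProd]
  have hpow : treeSeries φ ^ k = ∏ _i : Fin k, treeSeries φ := by simp
  rw [PowerSeries.coeff_succ_X_mul, coeff_treeSeries, sum_treesOfSize_succ, hpow,
    PowerSeries.coeff_prod]
  refine sum_congr rfl fun l _ => ?_
  simp only [coeff_treeSeries, prod_univ_sum, childProd]

lemma X_mul_derivative_treeSeries (φ : MTree k → R) :
    PowerSeries.X * d⁄dX R (treeSeries φ) = treeSeries fun T => φ T * T.internals := by
  ext (_ | n)
  · simp [constantCoeff_treeSeries, internals]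
  rw [PowerSeries.coeff_succ_X_mul, PowerSeries.coeff_derivative, coeff_treeSeries,
    coeff_treeSeries, sum_mul]
  refine sum_congr rfl fun T hT => ?_
  rw [mem_treesOfSize.1 hT]
  push_cast
  rfl

end Series

section Paths

variable {k : ℕ} (K : Finset (Fin k))

/-- For `K` the complement of `S`, the addresses of the vertices of `T^S`. -/
def keptPaths : MTree k → Finset (List (Fin k))
  | leaf => ∅
  | node c => insert [] (K.biUnion fun i => (keptPaths (c i)).image (List.cons i))

@[simp] lemma keptPaths_leaf : keptPaths K (leaf : MTree k) = ∅ := rfl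

variable {K}

lemma cons_mem_keptPaths_node_iff {c : Fin k → MTree k} {i : Fin k} {p : List (Fin k)} :
    i :: p ∈ keptPaths K (node c) ↔ i ∈ K ∧ p ∈ keptPaths K (c i) := by
  simp [keptPaths]

lemma exists_eq_node_of_mem_keptPaths {T : MTree k} {p : List (Fin k)}
    (hp : p ∈ keptPaths K T) : ∃ c, T = node c := by
  cases T with
  | leaf => simp at hp
  | node c => exact ⟨c, rfl⟩

lemma sum_keptPaths_node {M : Type*} [AddCommMonoid M] (c : Fin k → MTree k)
    (F : List (Fin k) → M) :
    ∑ p ∈ keptPaths K (node c), F p = F [] + ∑ i ∈ K, ∑ q ∈ keptPaths K (c i), F (i :: q) := by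
  rw [keptPaths, sum_insert (by simp), sum_biUnion]
  · simp only [sum_image fun _ _ _ _ h => List.cons_injective h]
  · intro i _ j _ hij
    simp only [Function.onFun, disjoint_left, mem_image]
    rintro _ ⟨q, -, rfl⟩ ⟨q', -, h⟩
    exact hij (List.cons_eq_cons.1 h).1.symm

lemma card_keptPaths_node (c : Fin k → MTree k) :
    (keptPaths K (node c)).card = 1 + ∑ i ∈ K, (keptPaths K (c i)).card := by
  simp only [card_eq_sum_ones, sum_keptPaths_node]

def subtreeAt : MTree k → List (Fin k) → MTree k
  | T, [] => T
  | leaf, _ :: _ => leaf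
  | node c, i :: p => subtreeAt (c i) p

def replaceAt : MTree k → List (Fin k) → MTree k → MTree k
  | _, [], B => B
  | leaf, _ :: _, _ => leaf
  | node c, i :: p, B => node (Function.update c i (replaceAt (c i) p B))

@[simp] lemma subtreeAt_nil (T : MTree k) : subtreeAt T [] = T := by cases T <;> rfl

@[simp] lemma subtreeAt_node_cons (c : Fin k → MTree k) (i : Fin k) (p : List (Fin k)) :
    subtreeAt (node c) (i :: p) = subtreeAt (c i) p := rfl

@[simp] lemma replaceAt_nil (T B : MTree k) : replaceAt T [] B = B := by cases T <;> rfl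

@[simp] lemma replaceAt_node_cons (c : Fin k → MTree k) (i : Fin k) (p : List (Fin k))
    (B : MTree k) :
    replaceAt (node c) (i :: p) B = node (Function.update c i (replaceAt (c i) p B)) := rfl

@[simp] lemma replaceAt_replaceAt (T : MTree k) (q : List (Fin k)) (B B' : MTree k) :
    replaceAt (replaceAt T q B) q B' = replaceAt T q B' := by
  induction q generalizing T with
  | nil => simp
  | cons i p ih => cases T <;> simp [replaceAt, ih]

@[simp] lemma replaceAt_subtreeAt (T : MTree k) (q : List (Fin k)) :
    replaceAt T q (subtreeAt T q) = T := by
  induction q generalizing T with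
  | nil => simp
  | cons i p ih => cases T <;> simp [replaceAt, ih]

variable {r : Fin k} {T : MTree k} {p : List (Fin k)}

lemma subtreeAt_replaceAt (hp : p ∈ keptPaths K T) (B : MTree k) :
    subtreeAt (replaceAt T (p ++ [r]) B) (p ++ [r]) = B := by
  induction p generalizing T with
  | nil => obtain ⟨c, rfl⟩ := exists_eq_node_of_mem_keptPaths hp; simp
  | cons i p ih =>
    obtain ⟨c, rfl⟩ := exists_eq_node_of_mem_keptPaths hp
    simpa using ih (cons_mem_keptPaths_node_iff.1 hp).2

lemma keptPaths_replaceAt (hr : r ∉ K) (hp : p ∈ keptPaths K T) (B : MTree k) :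
    keptPaths K (replaceAt T (p ++ [r]) B) = keptPaths K T := by
  induction p generalizing T with
  | nil =>
    obtain ⟨c, rfl⟩ := exists_eq_node_of_mem_keptPaths hp
    simp only [List.nil_append, replaceAt_node_cons, replaceAt_nil, keptPaths]
    congr 1
    refine biUnion_congr rfl fun j hj => ?_
    rw [Function.update_of_ne (ne_of_mem_of_not_mem hj hr)]
  | cons i p ih =>
    obtain ⟨c, rfl⟩ := exists_eq_node_of_mem_keptPaths hp
    simp only [List.cons_append, replaceAt_node_cons, keptPaths]
    congr 1
    refine biUnion_congr rfl fun j _ => ?_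
    rcases eq_or_ne j i with rfl | hne
    · rw [Function.update_self, ih (cons_mem_keptPaths_node_iff.1 hp).2]
    · rw [Function.update_of_ne hne]

lemma replaceAt_ne_leaf (hp : p ∈ keptPaths K T) (B : MTree k) :
    replaceAt T (p ++ [r]) B ≠ leaf := by
  obtain ⟨c, rfl⟩ := exists_eq_node_of_mem_keptPaths hp
  cases p <;> simp

lemma internals_replaceAt_add (hp : p ∈ keptPaths K T) (B : MTree k) :
    (replaceAt T (p ++ [r]) B).internals + (subtreeAt T (p ++ [r])).internals =
      T.internals + B.internals := by
  induction p generalizing T with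
  | nil =>
    obtain ⟨c, rfl⟩ := exists_eq_node_of_mem_keptPaths hp
    have := Fintype.sum_update_add_eq (f := fun j => (c j).internals) (i := r)
      (add_comm B.internals (c r).internals)
    simp only [← Function.apply_update (fun _ => internals)] at this
    simp only [List.nil_append, replaceAt_node_cons, replaceAt_nil, subtreeAt_node_cons,
      subtreeAt_nil, internals]
    omega
  | cons i p ih =>
    obtain ⟨c, rfl⟩ := exists_eq_node_of_mem_keptPaths hp
    have := Fintype.sum_update_add_eq (f := fun j => (c j).internals)
      (ih (cons_mem_keptPaths_node_iff.1 hp).2)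
    simp only [← Function.apply_update (fun _ => internals)] at this
    simp only [List.cons_append, replaceAt_node_cons, subtreeAt_node_cons, internals]
    omega

end Paths

section Grafting

variable {k : ℕ} {K : Finset (Fin k)}

lemma internals_eq_card_keptPaths_add (T : MTree k) :
    T.internals = (keptPaths K T).card +
      ∑ r ∈ Kᶜ, ∑ p ∈ keptPaths K T, (subtreeAt T (p ++ [r])).internals := by
  induction T with
  | leaf => simp [internals]
  | node c ih =>
    have hsplit := sum_add_sum_compl K fun i => (c i).internals
    have hK : ∑ i ∈ K, (c i).internals = ∑ i ∈ K, ((keptPaths K (c i)).card +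
        ∑ r ∈ Kᶜ, ∑ p ∈ keptPaths K (c i), (subtreeAt (c i) (p ++ [r])).internals) :=
      sum_congr rfl fun i _ => ih i
    simp only [sum_keptPaths_node, card_keptPaths_node, List.nil_append, List.cons_append,
      subtreeAt_node_cons, subtreeAt_nil, sum_add_distrib, internals] at hK ⊢
    rw [sum_comm (s := K) (t := Kᶜ)] at hK
    omega

/-- Cutting `T` at the `r`-th child of its vertex `p` gives a tree with a leaf there and the
cut-off subtree; grafting is the inverse. -/
lemma sum_keptPaths_eq_sum_graft {M : Type*} [AddCommMonoid M] {r : Fin k} (hr : r ∉ K)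
    (F : MTree k → List (Fin k) → M) (n : ℕ) :
    ∑ T ∈ treesOfSize n, ∑ p ∈ keptPaths K T, F T p =
      ∑ ab ∈ antidiagonal n, ∑ T ∈ treesOfSize ab.1,
        ∑ p ∈ (keptPaths K T).filter (fun p => subtreeAt T (p ++ [r]) = leaf),
          ∑ B ∈ treesOfSize ab.2, F (replaceAt T (p ++ [r]) B) p := by
  have hsigma : ∀ ab ∈ antidiagonal n, ∑ T ∈ treesOfSize ab.1,
        ∑ p ∈ (keptPaths K T).filter (fun p => subtreeAt T (p ++ [r]) = leaf),
          ∑ B ∈ treesOfSize ab.2, F (replaceAt T (p ++ [r]) B) p =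
      ∑ y ∈ (treesOfSize ab.1).sigma fun T =>
          (keptPaths K T).filter (fun p => subtreeAt T (p ++ [r]) = leaf) ×ˢ treesOfSize ab.2,
        F (replaceAt y.1 (y.2.1 ++ [r]) y.2.2) y.2.1 := fun ab _ => by
    rw [sum_sigma]
    exact sum_congr rfl fun T _ => (sum_product' _ _ _).symm
  rw [sum_congr rfl hsigma, sum_sigma', sum_sigma']
  refine sum_nbij'
    (fun x => ⟨((replaceAt x.1 (x.2 ++ [r]) leaf).internals,
        (subtreeAt x.1 (x.2 ++ [r])).internals),
      ⟨replaceAt x.1 (x.2 ++ [r]) leaf, (x.2, subtreeAt x.1 (x.2 ++ [r]))⟩⟩)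
    (fun y => ⟨replaceAt y.2.1 (y.2.2.1 ++ [r]) y.2.2.2, y.2.2.1⟩) ?_ ?_ ?_ ?_ (by simp)
  · rintro ⟨T, p⟩ hx
    simp only [mem_sigma, mem_treesOfSize] at hx
    have := internals_replaceAt_add (r := r) hx.2 leaf
    simp only [mem_sigma, mem_product, mem_filter, HasAntidiagonal.mem_antidiagonal,
      mem_treesOfSize, keptPaths_replaceAt hr hx.2, subtreeAt_replaceAt hx.2, internals] at this ⊢
    exact ⟨by omega, trivial, ⟨hx.2, trivial⟩, trivial⟩
  · rintro ⟨⟨a, b⟩, T, p, B⟩ hy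
    simp only [mem_sigma, mem_product, mem_filter, HasAntidiagonal.mem_antidiagonal,
      mem_treesOfSize] at hy
    obtain ⟨hab, hT, ⟨hp, hleaf⟩, hB⟩ := hy
    have := internals_replaceAt_add (r := r) hp B
    simp only [mem_sigma, mem_treesOfSize, keptPaths_replaceAt hr hp, hleaf, internals] at this ⊢
    exact ⟨by omega, hp⟩
  · rintro ⟨T, p⟩ -
    simp
  · rintro ⟨⟨a, b⟩, T, p, B⟩ hy
    simp only [mem_sigma, mem_product, mem_filter, HasAntidiagonal.mem_antidiagonal,
      mem_treesOfSize] at hy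
    obtain ⟨-, rfl, ⟨hp, hleaf⟩, rfl⟩ := hy
    have hT : replaceAt T (p ++ [r]) leaf = T := by
      simpa [hleaf] using replaceAt_subtreeAt T (p ++ [r])
    simp [hT, subtreeAt_replaceAt hp]

end Grafting

section HookWeights

variable {m : ℕ} (S : Finset (Fin m))

lemma card_keptPaths_eq_internalsS (T : MTree (m + 1)) :
    (keptPaths (S.image Fin.castSucc)ᶜ T).card = internalsS S T := by
  induction T with
  | leaf => rfl
  | node c ih => simp only [card_keptPaths_node, internalsS, ih]

noncomputable def hookWeight (T : MTree (m + 1)) : ℚ[X] :=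
  hookProdS S (fun h => (X : ℚ[X]) + C ((h : ℚ)⁻¹)) T

@[simp] lemma hookWeight_leaf : hookWeight S leaf = 1 := rfl

lemma hookWeight_of_ne_leaf {T : MTree (m + 1)} (hT : T ≠ leaf) :
    hookWeight S T = (X + C ((internalsS S T : ℚ)⁻¹)) * childProd (hookWeight S) T := by
  cases T with
  | leaf => contradiction
  | node c => rfl

lemma hookGFS_eq_treeSeries : hookGFS m S = treeSeries (hookWeight S) := by
  ext n
  have hset : {T : MTree (m + 1) | T.internals = n} = ↑(treesOfSize n : Finset (MTree (m + 1))) :=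
    Set.ext fun _ => mem_treesOfSize.symm
  rw [coeff_treeSeries, hookGFS, PowerSeries.coeff_mk, hookPolyS, hset, finsum_mem_coe_finset]
  rfl

lemma C_inv_internalsS_mul_internalsS {T : MTree (m + 1)} (hT : T ≠ leaf) :
    C ((internalsS S T : ℚ)⁻¹) * (internalsS S T : ℚ[X]) = 1 := by
  have hpos : internalsS S T ≠ 0 := by cases T <;> simp_all [internalsS]
  rw [← map_natCast C, ← map_mul, inv_mul_cancel₀ (Nat.cast_ne_zero.2 hpos), map_one]

variable {S} {r : Fin (m + 1)} {T : MTree (m + 1)} {p : List (Fin (m + 1))}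

lemma internalsS_replaceAt (hr : r ∈ S.image Fin.castSucc)
    (hp : p ∈ keptPaths (S.image Fin.castSucc)ᶜ T) (B : MTree (m + 1)) :
    internalsS S (replaceAt T (p ++ [r]) B) = internalsS S T := by
  rw [← card_keptPaths_eq_internalsS, ← card_keptPaths_eq_internalsS,
    keptPaths_replaceAt (notMem_compl.2 hr) hp]

lemma childProd_hookWeight_replaceAt_mul (hr : r ∈ S.image Fin.castSucc)
    (hp : p ∈ keptPaths (S.image Fin.castSucc)ᶜ T) (B : MTree (m + 1)) :
    childProd (hookWeight S) (replaceAt T (p ++ [r]) B) * hookWeight S (subtreeAt T (p ++ [r])) =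
      childProd (hookWeight S) T * hookWeight S B := by
  induction p generalizing T with
  | nil =>
    obtain ⟨c, rfl⟩ := exists_eq_node_of_mem_keptPaths hp
    have := Fintype.prod_update_mul_eq (f := fun j => hookWeight S (c j)) (i := r)
      (mul_comm (hookWeight S B) (hookWeight S (c r)))
    simpa [childProd, ← Function.apply_update (fun _ => hookWeight S)] using this
  | cons i p ih =>
    obtain ⟨c, rfl⟩ := exists_eq_node_of_mem_keptPaths hp
    have hpi := (cons_mem_keptPaths_node_iff.1 hp).2
    have hci : c i ≠ leaf := by rintro h; simp [h] at hpi
    have hchild : hookWeight S (replaceAt (c i) (p ++ [r]) B) *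
        hookWeight S (subtreeAt (c i) (p ++ [r])) = hookWeight S (c i) * hookWeight S B := by
      rw [hookWeight_of_ne_leaf S (replaceAt_ne_leaf hpi B), hookWeight_of_ne_leaf S hci,
        internalsS_replaceAt hr hpi, mul_assoc, ih hpi, mul_assoc]
    have := Fintype.prod_update_mul_eq (f := fun j => hookWeight S (c j)) hchild
    simpa [childProd, ← Function.apply_update (fun _ => hookWeight S)] using this

end HookWeights

section HookSeries

variable {m : ℕ} (S : Finset (Fin m))

lemma hookWeight_mul_internals (T : MTree (m + 1)) :
    hookWeight S T * (T.internals : ℚ[X]) =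
      X * (childProd (hookWeight S) T * (T.internals : ℚ[X])) + childProd (hookWeight S) T +
        ∑ r ∈ S.image Fin.castSucc, C ((internalsS S T : ℚ)⁻¹) * childProd (hookWeight S) T *
          ∑ p ∈ keptPaths (S.image Fin.castSucc)ᶜ T,
            ((subtreeAt T (p ++ [r])).internals : ℚ[X]) := by
  rcases eq_or_ne T leaf with rfl | hT
  · simp [childProd, internals]
  have hn : (T.internals : ℚ[X]) = internalsS S T + ∑ r ∈ S.image Fin.castSucc,
      ∑ p ∈ keptPaths (S.image Fin.castSucc)ᶜ T, ((subtreeAt T (p ++ [r])).internals : ℚ[X]) := by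
    rw [internals_eq_card_keptPaths_add (K := (S.image Fin.castSucc)ᶜ) T, compl_compl,
      card_keptPaths_eq_internalsS]
    push_cast
    rfl
  have hinv := C_inv_internalsS_mul_internalsS S hT
  rw [hookWeight_of_ne_leaf S hT, hn, ← mul_sum]
  linear_combination (childProd (hookWeight S) T) * hinv

noncomputable def markedSeries (r : Fin (m + 1)) (g : MTree (m + 1) → ℚ[X]) : ℚ[X]⟦X⟧ :=
  treeSeries fun T => C ((internalsS S T : ℚ)⁻¹) * childProd (hookWeight S) T *
    ∑ p ∈ keptPaths (S.image Fin.castSucc)ᶜ T, g (subtreeAt T (p ++ [r]))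

lemma markedSeries_one (r : Fin (m + 1)) :
    markedSeries S r (fun _ => 1) = PowerSeries.X * hookGFS m S ^ (m + 1) := by
  rw [hookGFS_eq_treeSeries, ← treeSeries_childProd, markedSeries]
  congr 1
  ext T
  rcases eq_or_ne T leaf with rfl | hT
  · simp [childProd]
  rw [sum_const, card_keptPaths_eq_internalsS, nsmul_one, mul_right_comm,
    C_inv_internalsS_mul_internalsS S hT, one_mul]

lemma markedSeries_eq_mul {r : Fin (m + 1)} (hr : r ∈ S.image Fin.castSucc)
    (g : MTree (m + 1) → ℚ[X]) :
    markedSeries S r g = markedSeries S r (fun B => if B = leaf then 1 else 0) *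
      treeSeries fun B => hookWeight S B * g B := by
  refine PowerSeries.ext fun n => ?_
  simp only [markedSeries, PowerSeries.coeff_mul, coeff_treeSeries, mul_sum, sum_mul]
  rw [sum_keptPaths_eq_sum_graft (M := ℚ[X]) (K := (S.image Fin.castSucc)ᶜ) (notMem_compl.2 hr)]
  refine sum_congr rfl fun ab _ => ?_
  rw [sum_comm (s := treesOfSize ab.2)]
  refine sum_congr rfl fun T _ => ?_
  rw [sum_filter, sum_comm (s := treesOfSize ab.2)]
  refine sum_congr rfl fun p hp => ?_
  split_ifs with hleaf
  · refine sum_congr rfl fun B _ => ?_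
    have hprod := childProd_hookWeight_replaceAt_mul hr hp B
    rw [hleaf, hookWeight_leaf, mul_one] at hprod
    rw [subtreeAt_replaceAt hp, internalsS_replaceAt hr hp, hprod]
    ring
  · simp

lemma hookGFS_ne_zero : hookGFS m S ≠ 0 := by
  intro h
  have := constantCoeff_treeSeries (hookWeight S)
  rw [← hookGFS_eq_treeSeries, h, map_zero, hookWeight_leaf] at this
  exact zero_ne_one this

lemma markedSeries_internals {r : Fin (m + 1)} (hr : r ∈ S.image Fin.castSucc) :
    markedSeries S r (fun B => B.internals) =
      PowerSeries.X ^ 2 * hookGFS m S ^ m * d⁄dX ℚ[X] (hookGFS m S) := by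
  have hone := markedSeries_eq_mul S hr fun _ => 1
  have hint := markedSeries_eq_mul S hr fun B => B.internals
  simp only [mul_one] at hone
  rw [markedSeries_one, ← hookGFS_eq_treeSeries] at hone
  rw [← X_mul_derivative_treeSeries, ← hookGFS_eq_treeSeries] at hint
  refine mul_right_cancel₀ (hookGFS_ne_zero S) ?_
  rw [hint]
  linear_combination (-(PowerSeries.X * d⁄dX ℚ[X] (hookGFS m S))) * hone

lemma X_mul_derivative_hookGFS :
    PowerSeries.X * d⁄dX ℚ[X] (hookGFS m S) =
      PowerSeries.C X * (PowerSeries.X * d⁄dX ℚ[X] (PowerSeries.X * hookGFS m S ^ (m + 1))) +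
        PowerSeries.X * hookGFS m S ^ (m + 1) +
        ∑ r ∈ S.image Fin.castSucc, markedSeries S r fun B => B.internals := by
  rw [hookGFS_eq_treeSeries, ← treeSeries_childProd, X_mul_derivative_treeSeries,
    X_mul_derivative_treeSeries, ← treeSeries_const_mul]
  simp only [markedSeries, ← map_sum, ← map_add]
  congr 1
  funext T
  simp only [Pi.add_apply, Finset.sum_apply]
  exact hookWeight_mul_internals S T

end HookSeries

end MTree

theorem hookGFS_differential_equation_general (m : ℕ) (S : Finset (Fin m)) :
    d⁄dX (Polynomial ℚ) (hookGFS m S) =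
      PowerSeries.C (R := Polynomial ℚ) ((X : ℚ[X]) + 1) * hookGFS m S ^ (m + 1) +
        PowerSeries.C (R := Polynomial ℚ)
            (((m : ℚ) - (S.card : ℚ) + 1) • (X : ℚ[X]) +
              (S.card : ℚ) • ((X : ℚ[X]) + 1)) * PowerSeries.X *
          hookGFS m S ^ m * d⁄dX (Polynomial ℚ) (hookGFS m S) := by
  have h := MTree.X_mul_derivative_hookGFS S
  rw [sum_congr rfl fun r hr => MTree.markedSeries_internals S hr, sum_const,
    card_image_of_injective _ (Fin.castSucc_injective m), nsmul_eq_mul] at h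
  set H := hookGFS m S
  have hd : d⁄dX ℚ[X] (PowerSeries.X * H ^ (m + 1)) =
      H ^ (m + 1) + PowerSeries.X * (((m : ℚ[X]⟦X⟧) + 1) * H ^ m * d⁄dX ℚ[X] H) := by
    simp
    ring
  rw [hd] at h
  refine mul_left_cancel₀ PowerSeries.X_ne_zero ?_
  simp only [Polynomial.smul_eq_C_mul, map_add, map_mul, map_one, map_sub, map_natCast] at h ⊢
  linear_combination h

/-- **Differential equation for `{}_Sℍ_m(x;t)`.**  For `m ≥ 1` and `S ⊆ [m]` with
`s = |S|`:
`{}_Sℍ'_m(x;t) = (x+1) ({}_Sℍ_m)^{m+1} + ((m-s+1)x + s(x+1)) t ({}_Sℍ_m)^m {}_Sℍ'_m`,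
the derivative being taken with respect to `t`. -/
theorem hookGFS_differential_equation (m : ℕ) (hm : 1 ≤ m) (S : Finset (Fin m)) :
    d⁄dX (Polynomial ℚ) (hookGFS m S) =
      PowerSeries.C (R := Polynomial ℚ) ((X : ℚ[X]) + 1) * hookGFS m S ^ (m + 1) +
        PowerSeries.C (R := Polynomial ℚ)
            (((m : ℚ) - (S.card : ℚ) + 1) • (X : ℚ[X]) +
              (S.card : ℚ) • ((X : ℚ[X]) + 1)) * PowerSeries.X *
          hookGFS m S ^ m * d⁄dX (Polynomial ℚ) (hookGFS m S) :=
  hookGFS_differential_equation_general m S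
end
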